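/- Every periodic orbit of the Reeb vector field R = x₁∂_{θ₁} − x₂∂_{θ₂} + x₃∂_{θ₃} on T³ × S² is non-contractible. Specifically, the flow fixes the S²-coordinate x = (x₁,−x₂,x₃), and a flow line (θ(0) + t·x', x) is periodic with period T > 0 if and only if T·x' ∈ 2πℤ³ with x' ≠ 0, in which case its class in π₁(T³ × S²) ≅ ℤ³ is the nonzero vector T·x'/(2π). -/
import Mathlib


/-!
STATEMENT 13. The Reeb flow of R = x₁∂_{θ₁} - x₂∂_{θ₂} + x₃∂_{θ₃} on
T³ × S² = (ℝ/2πℤ)³ × S² fixes the S²-coordinate x and translates the torus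
coordinates linearly by t·x' where x' = (x₁, -x₂, x₃).  A flow line is periodic with
period T > 0 iff T·x' ∈ 2πℤ³, and then its class m = T·x'/(2π) in
π₁(T³ × S²) ≅ ℤ³ is nonzero (since |x'| = 1 and T > 0); hence every periodic Reeb
orbit is non-contractible.
-/
theorem stmt13 (x : Fin 3 → ℝ) (hx : ∑ i, x i ^ 2 = 1)
    (x' : Fin 3 → ℝ) (hx' : x' = ![x 0, -x 1, x 2])
    (T : ℝ) (hT : 0 < T) :
    (∀ θ₀ : Fin 3 → AddCircle (2 * Real.pi),
        (fun i => θ₀ i + ((T * x' i : ℝ) : AddCircle (2 * Real.pi))) = θ₀)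
      ↔ ∃ m : Fin 3 → ℤ, (∀ i, T * x' i = 2 * Real.pi * m i) ∧ m ≠ 0 := by
  have hpi : (0:ℝ) < 2 * Real.pi := by positivity
  constructor
  · intro h
    have h0 := h 0
    have key : ∀ i, ∃ n : ℤ, T * x' i = 2 * Real.pi * n := by
      intro i
      have := congrFun h0 i
      simp only [Pi.zero_apply, zero_add] at this
      rw [AddCircle.coe_eq_zero_iff] at this
      obtain ⟨n, hn⟩ := this
      exact ⟨n, by rw [← hn, zsmul_eq_mul]; ring⟩
    choose m hm using key
    refine ⟨m, hm, ?_⟩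
    intro hm0
    have hx0 : ∀ i, x' i = 0 := by
      intro i
      have := hm i
      rw [hm0] at this
      simp at this
      rcases this with h | h
      · nlinarith [Real.pi_pos]
      · nlinarith
    have h0 : x' 0 = 0 := hx0 0
    have h1 : x' 1 = 0 := hx0 1
    have h2 : x' 2 = 0 := hx0 2
    rw [hx'] at h0 h1 h2
    simp at h0 h1 h2
    rw [Fin.sum_univ_three] at hx
    nlinarith
  · rintro ⟨m, hm, -⟩ θ₀
    funext i
    have : ((T * x' i : ℝ) : AddCircle (2 * Real.pi)) = 0 := by
      rw [AddCircle.coe_eq_zero_iff]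
      exact ⟨m i, by rw [hm i, zsmul_eq_mul]; ring⟩
    rw [this, add_zero]
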